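/- arXiv:1109.4472 — 4 statements merged into one kernel-verified Lean document; each statement's English description precedes it below -/
import Mathlib

section
/- (Bollobás–Erdős rhombus theorem.) Let k ≥ 1 be an integer and let 0 < γ < 1/4. Then there do not exist points p₁, p₂, q₁, q₂ on the unit sphere S^k ⊆ ℝ^{k+1} such that ‖p₁ − p₂‖ ≥ 2 − γ, ‖q₁ − q₂‖ ≥ 2 − γ, and ‖p_i − q_j‖ ≤ √2 − γ for all 1 ≤ i, j ≤ 2. -/
/-!
In any real inner product space, `‖p₁ + p₂ - q₁ - q₂‖²` is the sum of the four squared sides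
`‖pᵢ - qⱼ‖²` minus the two squared diagonals, so the squared diagonals of a quadrilateral sum to
at most its squared sides. Diagonals at least `2 - γ` and sides at most `√2 - γ` then force
`(2 - γ)² ≤ 2 (√2 - γ)²`, i.e. `γ ≥ 4 (√2 - 1)`, which fails for `γ < 1/4`.
-/

section Quadrilateral

variable {E : Type*} [NormedAddCommGroup E] [InnerProductSpace ℝ E]

theorem norm_add_sub_sub_sq (p₁ p₂ q₁ q₂ : E) :
    ‖p₁ + p₂ - q₁ - q₂‖ ^ 2 =
      ‖p₁ - q₁‖ ^ 2 + ‖p₁ - q₂‖ ^ 2 + ‖p₂ - q₁‖ ^ 2 + ‖p₂ - q₂‖ ^ 2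
        - ‖p₁ - p₂‖ ^ 2 - ‖q₁ - q₂‖ ^ 2 := by
  simp only [← real_inner_self_eq_norm_sq, inner_sub_left, inner_sub_right, inner_add_left,
    inner_add_right, real_inner_comm]
  ring

theorem norm_sub_sq_add_norm_sub_sq_le (p₁ p₂ q₁ q₂ : E) :
    ‖p₁ - p₂‖ ^ 2 + ‖q₁ - q₂‖ ^ 2 ≤
      ‖p₁ - q₁‖ ^ 2 + ‖p₁ - q₂‖ ^ 2 + ‖p₂ - q₁‖ ^ 2 + ‖p₂ - q₂‖ ^ 2 := by
  have := norm_add_sub_sub_sq p₁ p₂ q₁ q₂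
  nlinarith [sq_nonneg ‖p₁ + p₂ - q₁ - q₂‖]

theorem sq_le_two_mul_sq_of_rhombus {p₁ p₂ q₁ q₂ : E} {δ ε : ℝ} (hδ : 0 ≤ δ)
    (hp : δ ≤ ‖p₁ - p₂‖) (hq : δ ≤ ‖q₁ - q₂‖)
    (h₁₁ : ‖p₁ - q₁‖ ≤ ε) (h₁₂ : ‖p₁ - q₂‖ ≤ ε) (h₂₁ : ‖p₂ - q₁‖ ≤ ε) (h₂₂ : ‖p₂ - q₂‖ ≤ ε) :
    δ ^ 2 ≤ 2 * ε ^ 2 := by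
  have := norm_sub_sq_add_norm_sub_sq_le p₁ p₂ q₁ q₂
  have sq_le {a b : ℝ} (h₀ : 0 ≤ a) (h : a ≤ b) : a ^ 2 ≤ b ^ 2 := pow_le_pow_left₀ h₀ h 2
  linarith [sq_le hδ hp, sq_le hδ hq, sq_le (norm_nonneg _) h₁₁, sq_le (norm_nonneg _) h₁₂,
    sq_le (norm_nonneg _) h₂₁, sq_le (norm_nonneg _) h₂₂]

end Quadrilateral

theorem bollobas_erdos_rhombus_general
    (k : ℕ) (γ : ℝ) (hγ0 : 0 < γ) (hγ : γ < 1 / 4)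
    (p₁ p₂ q₁ q₂ : EuclideanSpace ℝ (Fin (k + 1)))
    (hpp : 2 - γ ≤ ‖p₁ - p₂‖) (hqq : 2 - γ ≤ ‖q₁ - q₂‖)
    (h11 : ‖p₁ - q₁‖ ≤ Real.sqrt 2 - γ) (h12 : ‖p₁ - q₂‖ ≤ Real.sqrt 2 - γ)
    (h21 : ‖p₂ - q₁‖ ≤ Real.sqrt 2 - γ) (h22 : ‖p₂ - q₂‖ ≤ Real.sqrt 2 - γ) :
    False := by
  have h := sq_le_two_mul_sq_of_rhombus (by linarith) hpp hqq h11 h12 h21 h22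
  have hs2 : Real.sqrt 2 ^ 2 = 2 := Real.sq_sqrt (by norm_num)
  have hs : (1.4 : ℝ) ≤ Real.sqrt 2 := by nlinarith [Real.sqrt_nonneg 2]
  nlinarith

/-- **Bollobás–Erdős rhombus theorem.** For `0 < γ < 1/4` there do not exist
points `p₁, p₂, q₁, q₂` on the unit sphere `S^k ⊆ ℝ^{k+1}` with
`‖p₁ - p₂‖ ≥ 2 - γ`, `‖q₁ - q₂‖ ≥ 2 - γ`, and `‖p_i - q_j‖ ≤ √2 - γ`
for all `i, j ∈ {1, 2}`. -/
theorem bollobas_erdos_rhombus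
    (k : ℕ) (hk : 1 ≤ k) (γ : ℝ) (hγ0 : 0 < γ) (hγ : γ < 1 / 4)
    (p₁ p₂ q₁ q₂ : EuclideanSpace ℝ (Fin (k + 1)))
    (hp₁ : ‖p₁‖ = 1) (hp₂ : ‖p₂‖ = 1) (hq₁ : ‖q₁‖ = 1) (hq₂ : ‖q₂‖ = 1)
    (hpp : 2 - γ ≤ ‖p₁ - p₂‖) (hqq : 2 - γ ≤ ‖q₁ - q₂‖)
    (h11 : ‖p₁ - q₁‖ ≤ Real.sqrt 2 - γ) (h12 : ‖p₁ - q₂‖ ≤ Real.sqrt 2 - γ)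
    (h21 : ‖p₂ - q₁‖ ≤ Real.sqrt 2 - γ) (h22 : ‖p₂ - q₂‖ ≤ Real.sqrt 2 - γ) :
    False :=
  bollobas_erdos_rhombus_general k γ hγ0 hγ p₁ p₂ q₁ q₂ hpp hqq h11 h12 h21 h22
end

section
/- Let k ≥ 2 and h be integers with 1 ≤ h ≤ ⌊k/2⌋, and let a be a real number with 0 < a < 1/(16h⁴). Let x₁, …, x_k be points on the unit sphere S^k ⊆ ℝ^{k+1} such that ‖x_i − x_{i+1}‖ ≥ 2 − a for every 1 ≤ i ≤ k − 1. Then ‖x₁ − x_{2h}‖ > 2 − 4h²a. -/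
/-!
For unit vectors the parallelogram law gives `‖u + v‖² + ‖u - v‖² = 4`, so a nearly antipodal
pair `‖u - v‖ ≥ 2 - a` has `‖u + v‖ ≤ 2√a`. Writing `x₁ + x_{2h}` as the alternating sum of the
`2h - 1` consecutive pair sums `x_i + x_{i+1}` gives `‖x₁ + x_{2h}‖ ≤ (2h - 1) · 2√a`, and the
parallelogram law once more turns this into `‖x₁ - x_{2h}‖² ≥ 4 - 4(2h - 1)²a`, which exceeds
`(2 - 4h²a)²` precisely because `16h⁴a < 1 < 16h - 4`.
-/

open Finset

theorem norm_sub_neg_one_pow_zsmul_le_sum {E : Type*} [SeminormedAddCommGroup E]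
    (x : ℕ → E) (n : ℕ) :
    ‖x 0 - (-1 : ℤ) ^ n • x n‖ ≤ ∑ i ∈ range n, ‖x i + x (i + 1)‖ := by
  induction n with
  | zero => simp
  | succ n ih =>
    have htelescope : x 0 - (-1 : ℤ) ^ (n + 1) • x (n + 1) =
        (x 0 - (-1 : ℤ) ^ n • x n) + (-1 : ℤ) ^ n • (x n + x (n + 1)) := by
      rw [pow_succ, smul_add, mul_neg_one, neg_smul]
      abel
    have hsign : ‖(-1 : ℤ) ^ n • (x n + x (n + 1))‖ = ‖x n + x (n + 1)‖ := by
      rcases neg_one_pow_eq_or ℤ n with h | h <;> simp only [h, one_smul, neg_smul, norm_neg]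
    rw [sum_range_succ, htelescope]
    exact (norm_add_le _ _).trans (by rw [hsign]; gcongr)

section UnitVectors

variable {E : Type*} [NormedAddCommGroup E] [InnerProductSpace ℝ E] {u v : E}

theorem norm_add_sq_add_norm_sub_sq_of_norm_eq_one (hu : ‖u‖ = 1) (hv : ‖v‖ = 1) :
    ‖u + v‖ ^ 2 + ‖u - v‖ ^ 2 = 4 := by
  have := parallelogram_law_with_norm ℝ u v
  rw [hu, hv] at this
  linarith

theorem norm_add_le_two_mul_sqrt_of_two_sub_le_norm_sub {a : ℝ} (hu : ‖u‖ = 1) (hv : ‖v‖ = 1)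
    (ha : a ≤ 2) (huv : 2 - a ≤ ‖u - v‖) : ‖u + v‖ ≤ 2 * √a := by
  have hsq : ‖u + v‖ ^ 2 ≤ 4 * a := by
    nlinarith [norm_add_sq_add_norm_sub_sq_of_norm_eq_one hu hv, sub_nonneg.mpr ha]
  calc ‖u + v‖ = √(‖u + v‖ ^ 2) := (Real.sqrt_sq (norm_nonneg _)).symm
    _ ≤ √(4 * a) := Real.sqrt_le_sqrt hsq
    _ = 2 * √a := by
      rw [Real.sqrt_mul (by norm_num), show (4 : ℝ) = 2 ^ 2 by norm_num,
        Real.sqrt_sq (by norm_num)]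

end UnitVectors

theorem antipodal_chain_general
    (k h : ℕ) (hh1 : 1 ≤ h) (hh2 : h ≤ k / 2)
    (a : ℝ) (ha0 : 0 < a) (ha : a < 1 / (16 * (h : ℝ) ^ 4))
    (x : ℕ → EuclideanSpace ℝ (Fin (k + 1)))
    (hsphere : ∀ i : ℕ, 1 ≤ i → i ≤ k → ‖x i‖ = 1)
    (hchain : ∀ i : ℕ, 1 ≤ i → i < k → 2 - a ≤ ‖x i - x (i + 1)‖) :
    2 - 4 * (h : ℝ) ^ 2 * a < ‖x 1 - x (2 * h)‖ := by
  have hH : (1 : ℝ) ≤ h := by exact_mod_cast hh1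
  have h16 : 16 * (h : ℝ) ^ 4 * a < 1 := by
    rwa [lt_div_iff₀ (by positivity), mul_comm] at ha
  have ha2 : a ≤ 2 := by nlinarith [one_le_pow₀ (n := 4) hH]
  have hpair : ∀ i < 2 * h - 1, ‖x (i + 1) + x (i + 1 + 1)‖ ≤ 2 * √a := fun i hi =>
    norm_add_le_two_mul_sqrt_of_two_sub_le_norm_sub (hsphere _ (by omega) (by omega))
      (hsphere _ (by omega) (by omega)) ha2 (hchain _ (by omega) (by omega))
  have hsum : ‖x 1 + x (2 * h)‖ ≤ (2 * h - 1) * (2 * √a) := by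
    have htel := norm_sub_neg_one_pow_zsmul_le_sum (fun i => x (i + 1)) (2 * h - 1)
    rw [show 2 * h - 1 + 1 = 2 * h by omega, Odd.neg_one_pow ⟨h - 1, by omega⟩,
      neg_one_smul, sub_neg_eq_add] at htel
    simpa [Nat.cast_sub (show 1 ≤ 2 * h by omega)] using
      htel.trans (sum_le_card_nsmul _ _ _ fun i hi => hpair i (mem_range.mp hi))
  have hpar := norm_add_sq_add_norm_sub_sq_of_norm_eq_one (hsphere 1 le_rfl (by omega))
    (hsphere (2 * h) (by omega) (by omega))
  have hsum_sq : ‖x 1 + x (2 * h)‖ ^ 2 ≤ (2 * h - 1) ^ 2 * (4 * a) := by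
    calc _ ≤ ((2 * h - 1) * (2 * √a)) ^ 2 := pow_le_pow_left₀ (norm_nonneg _) hsum 2
      _ = _ := by rw [mul_pow, mul_pow, Real.sq_sqrt ha0.le]; ring
  refine lt_of_pow_lt_pow_left₀ 2 (norm_nonneg _) ?_
  nlinarith

/-- **Lemma (near-antipodal chains on the sphere).** Let `k ≥ 2`,
`1 ≤ h ≤ ⌊k/2⌋`, and `0 < a < 1/(16h⁴)`. If `x₁, …, x_k` are points on the
unit sphere `S^k ⊆ ℝ^{k+1}` with `‖x_i - x_{i+1}‖ ≥ 2 - a` for every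
`1 ≤ i ≤ k - 1`, then `‖x₁ - x_{2h}‖ > 2 - 4h²a`. -/
theorem antipodal_chain
    (k h : ℕ) (hk : 2 ≤ k) (hh1 : 1 ≤ h) (hh2 : h ≤ k / 2)
    (a : ℝ) (ha0 : 0 < a) (ha : a < 1 / (16 * (h : ℝ) ^ 4))
    (x : ℕ → EuclideanSpace ℝ (Fin (k + 1)))
    (hsphere : ∀ i : ℕ, 1 ≤ i → i ≤ k → ‖x i‖ = 1)
    (hchain : ∀ i : ℕ, 1 ≤ i → i < k → 2 - a ≤ ‖x i - x (i + 1)‖) :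
    2 - 4 * (h : ℝ) ^ 2 * a < ‖x 1 - x (2 * h)‖ :=
  antipodal_chain_general k h hh1 hh2 a ha0 ha x hsphere hchain
end

section
/- Let d ≥ 2 and r ≥ 2 be integers and let θ be a real number with 0 < θ < 1/r². Let p₁, …, p_r be points on the unit sphere S^d ⊆ ℝ^{d+1} such that ‖p_i − p_{i+1}‖ ≥ 2 − θ/r² for every 1 ≤ i ≤ r − 1. Then for all 1 ≤ i < j ≤ r with j − i odd (i.e., i and j of opposite parity), ‖p_i − p_j‖ > 2 − θ. In particular, under these hypotheses all pairs {p_i, p_j} corresponding to edges of the complete bipartite graph between odd-indexed and even-indexed vertices are at distance greater than 2 − θ. -/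
/-! If `x, y` are unit vectors then `‖x + y‖² + ‖x - y‖² = 4`, so a near-antipodal pair
(`‖x - y‖ ≥ 2 - δ`) has `‖x + y‖ ≤ 2√δ`. Flipping the sign of every other point of the path
turns these small sums into small steps, and the triangle inequality along the path bounds
`‖p_i + p_j‖` for `j - i` odd by `(j - i) · 2√δ`; with `δ = θ / r²` this is small enough to
force `‖p_i - p_j‖ > 2 - θ`. -/

open Real

section UnitVectors

variable {E : Type*} [NormedAddCommGroup E] [InnerProductSpace ℝ E] {x y : E}

theorem norm_add_sq_add_norm_sub_sq_of_norm_eq_one_s8 (hx : ‖x‖ = 1) (hy : ‖y‖ = 1) :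
    ‖x + y‖ ^ 2 + ‖x - y‖ ^ 2 = 4 := by
  rw [parallelogram_law_with_norm ℝ, hx, hy]
  norm_num

theorem norm_add_le_two_mul_sqrt_of_le_norm_sub {δ : ℝ} (hx : ‖x‖ = 1) (hy : ‖y‖ = 1)
    (h : 2 - δ ≤ ‖x - y‖) : ‖x + y‖ ≤ 2 * √δ := by
  have hsum := norm_add_sq_add_norm_sub_sq_of_norm_eq_one_s8 hx hy
  have hsub : ‖x - y‖ ≤ 2 := by
    calc ‖x - y‖ ≤ ‖x‖ + ‖y‖ := norm_sub_le x y
      _ = 2 := by rw [hx, hy]; norm_num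
  have hδ : 0 ≤ δ := by linarith [norm_nonneg (x - y)]
  rw [show 2 * √δ = √(4 * δ) by
    rw [sqrt_mul (by norm_num), show (4 : ℝ) = 2 ^ 2 by norm_num, sqrt_sq (by norm_num)]]
  apply le_sqrt_of_sq_le
  nlinarith

theorem lt_norm_sub_of_norm_add_sq_lt {θ : ℝ} (hx : ‖x‖ = 1) (hy : ‖y‖ = 1)
    (h : ‖x + y‖ ^ 2 < 4 * θ - θ ^ 2) : 2 - θ < ‖x - y‖ := by
  have hsum := norm_add_sq_add_norm_sub_sq_of_norm_eq_one_s8 hx hy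
  exact lt_of_pow_lt_pow_left₀ 2 (norm_nonneg _) (by nlinarith)

end UnitVectors

theorem norm_neg_one_pow_zsmul {E : Type*} [SeminormedAddCommGroup E] (k : ℕ) (v : E) :
    ‖((-1 : ℤ) ^ k) • v‖ = ‖v‖ := by
  rcases neg_one_pow_eq_or ℤ k with h | h <;> simp [h]

/-- The sequence `(-1)ᵏ • f k` has steps of norm `‖f k + f (k + 1)‖`. -/
theorem norm_add_le_of_norm_add_succ_le {E : Type*} [SeminormedAddCommGroup E] {f : ℕ → E}
    {m n : ℕ} {s : ℝ} (hmn : m ≤ n) (hodd : Odd (n - m))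
    (hstep : ∀ k, m ≤ k → k < n → ‖f k + f (k + 1)‖ ≤ s) :
    ‖f m + f n‖ ≤ (n - m : ℕ) * s := by
  set g : ℕ → E := fun k => ((-1 : ℤ) ^ k) • f k
  have hg : dist (g m) (g n) ≤ ∑ _k ∈ Finset.Ico m n, s := by
    refine dist_le_Ico_sum_of_dist_le hmn fun {k} hmk hkn => ?_
    have : g k - g (k + 1) = ((-1 : ℤ) ^ k) • (f k + f (k + 1)) := by
      simp only [g, pow_succ, mul_neg_one, neg_smul, sub_neg_eq_add, smul_add]
    rw [dist_eq_norm, this, norm_neg_one_pow_zsmul]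
    exact hstep k hmk hkn
  have hends : g m - g n = ((-1 : ℤ) ^ m) • (f m + f n) := by
    obtain ⟨k, hk⟩ : ∃ k, n = m + k := ⟨n - m, by omega⟩
    subst hk
    simp only [g, pow_add, (show Odd k by simpa using hodd).neg_one_pow, mul_neg_one, neg_smul,
      sub_neg_eq_add, smul_add]
  rwa [dist_eq_norm, hends, norm_neg_one_pow_zsmul, Finset.sum_const, Nat.card_Ico,
    nsmul_eq_mul] at hg

theorem four_mul_sq_mul_div_sq_lt {θ R k : ℝ} (hθ0 : 0 < θ) (hθ : θ < 1 / R ^ 2)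
    (hk : 0 ≤ k) (hkR : k + 1 ≤ R) : 4 * k ^ 2 * (θ / R ^ 2) < 4 * θ - θ ^ 2 := by
  have hR : 0 < R ^ 2 := by nlinarith
  have hθR : θ * R ^ 2 < 1 := (lt_div_iff₀ hR).mp hθ
  rw [← mul_div_assoc, div_lt_iff₀ hR]
  nlinarith [mul_le_mul_of_nonneg_left (pow_le_pow_left₀ hk (show k ≤ R - 1 by linarith) 2)
    hθ0.le, mul_lt_mul_of_pos_left hθR hθ0]

theorem antipodal_path_to_bipartite_general
    (d r : ℕ)
    (θ : ℝ) (hθ0 : 0 < θ) (hθ : θ < 1 / (r : ℝ) ^ 2)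
    (p : ℕ → EuclideanSpace ℝ (Fin (d + 1)))
    (hsphere : ∀ i : ℕ, 1 ≤ i → i ≤ r → ‖p i‖ = 1)
    (hpath : ∀ i : ℕ, 1 ≤ i → i < r → 2 - θ / (r : ℝ) ^ 2 ≤ ‖p i - p (i + 1)‖) :
    ∀ i j : ℕ, 1 ≤ i → i < j → j ≤ r → Odd (j - i) →
      2 - θ < ‖p i - p j‖ := by
  intro i j hi hij hjr hodd
  have hsum : ‖p i + p j‖ ≤ (j - i : ℕ) * (2 * √(θ / r ^ 2)) :=
    norm_add_le_of_norm_add_succ_le hij.le hodd fun k hik hkj =>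
      norm_add_le_two_mul_sqrt_of_le_norm_sub (hsphere k (by omega) (by omega))
        (hsphere (k + 1) (by omega) (by omega)) (hpath k (by omega) (by omega))
  have hsq : ‖p i + p j‖ ^ 2 ≤ 4 * ((j - i : ℕ) : ℝ) ^ 2 * (θ / r ^ 2) := by
    calc ‖p i + p j‖ ^ 2 ≤ ((j - i : ℕ) * (2 * √(θ / r ^ 2))) ^ 2 :=
          pow_le_pow_left₀ (norm_nonneg _) hsum 2
      _ = _ := by rw [mul_pow, mul_pow, sq_sqrt (by positivity)]; ring
  have hjir : ((j - i : ℕ) : ℝ) + 1 ≤ r := by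
    exact_mod_cast (show j - i + 1 ≤ r by omega)
  exact lt_norm_sub_of_norm_add_sq_lt (hsphere i hi (by omega)) (hsphere j (by omega) hjr)
    (hsq.trans_lt (four_mul_sq_mul_div_sq_lt hθ0 hθ (Nat.cast_nonneg _) hjir))

/-- **Lemma (from a near-antipodal path to a near-antipodal complete
bipartite pattern).** Let `d, r ≥ 2` and `0 < θ < 1/r²`. If `p₁, …, p_r` are
points on the unit sphere `S^d ⊆ ℝ^{d+1}` with `‖p_i - p_{i+1}‖ ≥ 2 - θ/r²`
for every `1 ≤ i ≤ r - 1`, then for all `1 ≤ i < j ≤ r` with `j - i` odd we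
have `‖p_i - p_j‖ > 2 - θ`. -/
theorem antipodal_path_to_bipartite
    (d r : ℕ) (hd : 2 ≤ d) (hr : 2 ≤ r)
    (θ : ℝ) (hθ0 : 0 < θ) (hθ : θ < 1 / (r : ℝ) ^ 2)
    (p : ℕ → EuclideanSpace ℝ (Fin (d + 1)))
    (hsphere : ∀ i : ℕ, 1 ≤ i → i ≤ r → ‖p i‖ = 1)
    (hpath : ∀ i : ℕ, 1 ≤ i → i < r → 2 - θ / (r : ℝ) ^ 2 ≤ ‖p i - p (i + 1)‖) :
    ∀ i j : ℕ, 1 ≤ i → i < j → j ≤ r → Odd (j - i) →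
      2 - θ < ‖p i - p j‖ :=
  antipodal_path_to_bipartite_general d r θ hθ0 hθ p hsphere hpath
end

section
/- (Property (P2).) For every β > 0, every ε > 0, and every integer r ≥ 1, for all sufficiently large integers k the following holds: for every unit vector c ∈ ℝ^{k+1} and every real s₀ ∈ [0,1] with √(1 − s₀²) ≤ 1 − ε/(4r²√k), the spherical cap C = {x ∈ S^k : ⟨x, c⟩ ≥ s₀} satisfies μ(C) ≤ β. (Equivalently: every spherical cap of S^k whose diameter is at most 2 − ε/(2r²√k) has normalized measure at most β.) -/
/-!
An isometry-invariant measure gives all caps of the same height `s` the same measure. Take the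
`n = k + 1` caps centred at the vectors of an orthonormal basis: by Bessel's inequality a unit
vector lies in at most `1 / s²` of them, so `n · μ(C) ≤ 1 / s²`. The diameter condition gives
`s² ≥ 1 - √(1 - s²) ≥ ε / (4r²√k)`, hence `μ(C) ≤ 4r²√k / (ε (k + 1)) → 0`.
-/

open MeasureTheory Finset Module
open scoped RealInnerProductSpace

open Classical in
theorem sum_measureReal_le_of_card_le {ι α : Type*} [Fintype ι] [MeasurableSpace α]
    (μ : Measure α) [IsFiniteMeasure μ] {A : ι → Set α} (hA : ∀ i, MeasurableSet (A i)) {m : ℝ}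
    (hm : ∀ x, (#{i | x ∈ A i} : ℝ) ≤ m) :
    ∑ i, μ.real (A i) ≤ m * μ.real Set.univ := by
  have hcount (x : α) : ∑ i, (A i).indicator (1 : α → ℝ) x = #{i | x ∈ A i} := by
    simp [Set.indicator_apply]
  calc ∑ i, μ.real (A i) = ∫ x, ∑ i, (A i).indicator 1 x ∂μ := by
        rw [integral_finsetSum _ fun i _ => (integrable_const 1).indicator (hA i)]
        simp [integral_indicator_one (hA _)]
    _ ≤ ∫ _, m ∂μ :=
        integral_mono (integrable_finsetSum _ fun i _ => (integrable_const 1).indicator (hA i))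
          (integrable_const m) fun x => (hcount x).trans_le (hm x)
    _ = m * μ.real Set.univ := by rw [integral_const, smul_eq_mul, mul_comm]

section SphericalCap

variable {E : Type*} [NormedAddCommGroup E] [InnerProductSpace ℝ E]

def sphericalCap (c : E) (s : ℝ) : Set E := {x | ‖x‖ = 1 ∧ s ≤ ⟪x, c⟫}

theorem isClosed_sphericalCap (c : E) (s : ℝ) : IsClosed (sphericalCap c s) := by
  rw [sphericalCap, Set.ofPred_and]
  exact (isClosed_eq continuous_norm continuous_const).inter
    (isClosed_le continuous_const (continuous_id.inner continuous_const))

theorem preimage_sphericalCap (R : E ≃ₗᵢ[ℝ] E) (c : E) (s : ℝ) :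
    R ⁻¹' sphericalCap (R c) s = sphericalCap c s := by
  ext x
  simp [sphericalCap, R.inner_map_map]

theorem exists_linearIsometryEquiv_apply_eq {u v : E} (h : ‖u‖ = ‖v‖) :
    ∃ R : E ≃ₗᵢ[ℝ] E, R u = v :=
  ⟨_, Submodule.reflection_sub h⟩

open Classical in
theorem card_mem_sphericalCap_mul_sq_le {ι : Type*} [Fintype ι] {v : ι → E}
    (hv : Orthonormal ℝ v) {s : ℝ} (hs : 0 ≤ s) (x : E) :
    (#{i | x ∈ sphericalCap (v i) s} : ℝ) * s ^ 2 ≤ 1 := by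
  set T : Finset ι := {i | x ∈ sphericalCap (v i) s}
  obtain hT | ⟨j, hj⟩ := T.eq_empty_or_nonempty
  · simp [hT]
  have hx : ‖x‖ = 1 := (mem_filter.mp hj).2.1
  calc (#T : ℝ) * s ^ 2 = ∑ i ∈ T, s ^ 2 := by rw [sum_const, nsmul_eq_mul]
    _ ≤ ∑ i ∈ T, ‖⟪v i, x⟫‖ ^ 2 := by
        refine sum_le_sum fun i hi => ?_
        rw [Real.norm_eq_abs, sq_abs, real_inner_comm]
        exact pow_le_pow_left₀ hs (mem_filter.mp hi).2.2 2
    _ ≤ ‖x‖ ^ 2 := hv.sum_inner_products_le x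
    _ = 1 := by rw [hx, one_pow]

variable [MeasurableSpace E] [BorelSpace E]

theorem measure_sphericalCap_eq (μ : Measure E) (hμ : ∀ R : E ≃ₗᵢ[ℝ] E, μ.map R = μ)
    {u c : E} (h : ‖u‖ = ‖c‖) (s : ℝ) : μ (sphericalCap u s) = μ (sphericalCap c s) := by
  obtain ⟨R, rfl⟩ := exists_linearIsometryEquiv_apply_eq h.symm
  rw [← preimage_sphericalCap R c s, ← Measure.map_apply R.continuous.measurable
    (isClosed_sphericalCap _ s).measurableSet, hμ]

theorem measureReal_sphericalCap_le [FiniteDimensional ℝ E] (μ : Measure E) [IsFiniteMeasure μ]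
    (hμ : ∀ R : E ≃ₗᵢ[ℝ] E, μ.map R = μ) {c : E} (hc : ‖c‖ = 1) {s : ℝ} (hs : 0 < s) :
    finrank ℝ E * s ^ 2 * μ.real (sphericalCap c s) ≤ μ.real Set.univ := by
  let b := stdOrthonormalBasis ℝ E
  have hcount (x : E) := card_mem_sphericalCap_mul_sq_le b.orthonormal hs.le x
  have hsum : ∑ i, μ.real (sphericalCap (b i) s) ≤ 1 / s ^ 2 * μ.real Set.univ :=
    sum_measureReal_le_of_card_le μ (fun i => (isClosed_sphericalCap _ s).measurableSet)
      fun x => (le_div_iff₀ (by positivity)).2 (hcount x)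
  have hcap (i) : μ.real (sphericalCap (b i) s) = μ.real (sphericalCap c s) :=
    congrArg ENNReal.toReal (measure_sphericalCap_eq μ hμ ((b.norm_eq_one i).trans hc.symm) s)
  simp only [hcap, sum_const, card_univ, Fintype.card_fin, nsmul_eq_mul] at hsum
  calc finrank ℝ E * s ^ 2 * μ.real (sphericalCap c s)
      = s ^ 2 * (finrank ℝ E * μ.real (sphericalCap c s)) := by ring
    _ ≤ s ^ 2 * (1 / s ^ 2 * μ.real Set.univ) := by gcongr
    _ = μ.real Set.univ := by field_simp

end SphericalCap

theorem le_sq_of_sqrt_one_sub_sq_le {s δ : ℝ} (h : √(1 - s ^ 2) ≤ 1 - δ) : δ ≤ s ^ 2 := by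
  have : 1 - s ^ 2 ≤ √(1 - s ^ 2) := Real.le_sqrt_self_iff.2 (by nlinarith [sq_nonneg s])
  linarith

open Filter in
theorem tendsto_natCast_add_one_mul_div_sqrt_atTop {a : ℝ} (ha : 0 < a) :
    Tendsto (fun k : ℕ => ((k : ℝ) + 1) * (a / √k)) atTop atTop := by
  refine tendsto_atTop_mono (fun k => ?_)
    ((Real.tendsto_sqrt_atTop.comp tendsto_natCast_atTop_atTop).const_mul_atTop ha)
  calc a * √k = k * (a / √k) := by rw [mul_div_left_comm, Real.div_sqrt]
    _ ≤ (k + 1) * (a / √k) := by gcongr; linarith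

/-- **Property (P2).** For every `β > 0`, `ε > 0`, and integer `r ≥ 1`, for
all sufficiently large `k`: every spherical cap
`C = {x ∈ S^k : ⟨x, c⟩ ≥ s₀}` with `c` a unit vector and `s₀ ∈ [0,1]`
satisfying `√(1 - s₀²) ≤ 1 - ε/(4r²√k)` (i.e. every cap of diameter at most
`2 - ε/(2r²√k)`) has normalized measure `μ(C) ≤ β`, where `μ` is the
rotation-invariant probability measure on the unit sphere `S^k ⊆ ℝ^{k+1}`
(formalized here as any probability measure on `ℝ^{k+1}` concentrated on
`S^k` and invariant under all linear isometries). -/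
theorem property_P2 (β ε : ℝ) (hβ : 0 < β) (hε : 0 < ε) (r : ℕ) (hr : 1 ≤ r) :
    ∃ k₀ : ℕ, ∀ k : ℕ, k₀ ≤ k →
      ∀ μ : MeasureTheory.Measure (EuclideanSpace ℝ (Fin (k + 1))),
        MeasureTheory.IsProbabilityMeasure μ →
        μ {x | ‖x‖ = 1} = 1 →
        (∀ R : EuclideanSpace ℝ (Fin (k + 1)) ≃ₗᵢ[ℝ] EuclideanSpace ℝ (Fin (k + 1)),
          MeasureTheory.Measure.map R μ = μ) →
        ∀ c : EuclideanSpace ℝ (Fin (k + 1)), ‖c‖ = 1 →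
          ∀ s₀ : ℝ, 0 ≤ s₀ → s₀ ≤ 1 →
            Real.sqrt (1 - s₀ ^ 2) ≤ 1 - ε / (4 * (r : ℝ) ^ 2 * Real.sqrt k) →
            (μ {x | ‖x‖ = 1 ∧ s₀ ≤ (inner ℝ x c : ℝ)}).toReal ≤ β := by
  have hr₀ : (0 : ℝ) < r := by exact_mod_cast hr
  obtain ⟨k₀, hk₀⟩ := Filter.eventually_atTop.1 <|
    (tendsto_natCast_add_one_mul_div_sqrt_atTop (by positivity : 0 < ε / (4 * (r : ℝ) ^ 2))
      ).eventually_ge_atTop β⁻¹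
  refine ⟨k₀, fun k hk μ _ _ hμ c hc s₀ hs₀ _ hcap => ?_⟩
  set δ := ε / (4 * (r : ℝ) ^ 2 * √k)
  have hkδ : β⁻¹ ≤ (k + 1) * δ := by simpa only [div_div] using hk₀ k hk
  have hδ : 0 < δ := pos_of_mul_pos_right ((inv_pos.2 hβ).trans_le hkδ) (by positivity)
  have hδs : δ ≤ s₀ ^ 2 := le_sq_of_sqrt_one_sub_sq_le hcap
  have hs : 0 < s₀ := hs₀.lt_of_ne' (pow_ne_zero_iff two_ne_zero |>.1 (hδ.trans_le hδs).ne')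
  have hbound := measureReal_sphericalCap_le μ hμ hc hs
  rw [finrank_euclideanSpace_fin, probReal_univ, Nat.cast_add_one] at hbound
  change μ.real (sphericalCap c s₀) ≤ β
  calc μ.real (sphericalCap c s₀) = β * (β⁻¹ * μ.real (sphericalCap c s₀)) := by field_simp
    _ ≤ β * ((k + 1) * s₀ ^ 2 * μ.real (sphericalCap c s₀)) := by
        gcongr
        exact hkδ.trans (by gcongr)
    _ ≤ β := mul_le_of_le_one_right hβ.le hbound
end
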